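/- For every complex number s with Re(s) > 0, the series ∑_{η1,η2,η3,η4 ≥ 1} ϑ(η1,η2,η3,η4)·η1^{−(4s+1)} η2^{−(2s+1)} η3^{−(3s+1)} η4^{−(3s+1)} converges absolutely and equals the Euler product ∏_p [ 1 + (1 − 1/p)·( 1/(p^{2s+1}−1) + 2/(p^{3s+1}−1) + (1 − 2/p)/(p^{4s+1}−1) ) + (1 − 1/p)²·(1/(p^{4s+1}−1))·( 1/(p^{2s+1}−1) + 2/(p^{3s+1}−1) ) ] over all primes p. -/

import Mathlib

noncomputable section

/-- `φ*(n) = ∏_{p | n} (1 - 1/p)`. -/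
def phiStar (n : ℕ) : ℝ := ∏ p ∈ n.primeFactors, (1 - 1 / (p : ℝ))

/-- `ϑ(η₁,η₂,η₃,η₄)`. -/
def vartheta (η1 η2 η3 η4 : ℕ) : ℝ :=
  if Nat.Coprime η2 η3 ∧ Nat.Coprime η2 η4 ∧ Nat.Coprime η3 η4 then
    phiStar η1 * phiStar η2 * phiStar η3 * phiStar η4 *
      ∏ p ∈ η1.primeFactors.filter (fun p => ¬ p ∣ η2 * η3 * η4), (1 - 2 / (p : ℝ))
  else 0

/-! The summand `F(η) = ϑ(η) η₁^{-z₁} η₂^{-z₂} η₃^{-z₃} η₄^{-z₄}` is multiplicative on quadruples: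
`F(η η') = F(η) F(η')` whenever the coordinates of `η` are coprime to those of `η'`, because `φ*`,
the coprimality condition and the product over `p ∣ η₁, p ∤ η₂η₃η₄` all split over coprime
factors. Since `|ϑ| ≤ 1`, `F` is absolutely summable for `Re zᵢ > 1`, and the Euler product argument
for one variable (induction over finite sets of primes, then a tail estimate) goes through verbatim
for functions of several variables. The local factor at `p` is the sum of `F` over prime-power
quadruples; there `ϑ` only depends on which exponents vanish, so the local factor is a sum of four
products of geometric series in `p^{-zᵢ}`. -/

open Nat Finset

section MultivariateEulerProduct

variable {R : Type*} [NormedCommRing R] [CompleteSpace R] {ι : Type*} [Fintype ι]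
  {f : (ι → ℕ) → R}

def equivProdPiFactoredNumbers {p : ℕ} {S : Finset ℕ} (hp : p.Prime) (hS : p ∉ S) :
    (ι → ℕ) × (ι → factoredNumbers S) ≃ (ι → factoredNumbers (insert p S)) :=
  (Equiv.arrowProdEquivProdArrow ι _ _).symm.trans
    (Equiv.piCongrRight fun _ => equivProdNatFactoredNumbers hp hS)

omit [CompleteSpace R] in
lemma map_equivProdPiFactoredNumbers
    (hmul : ∀ {m n : ι → ℕ}, Coprime (∏ i, m i) (∏ i, n i) → f (m * n) = f m * f n)
    {S : Finset ℕ} {p : ℕ} (hp : p.Prime) (hS : p ∉ S) (x : (ι → ℕ) × (ι → factoredNumbers S)) :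
    f (fun i => equivProdPiFactoredNumbers hp hS x i) =
      f (fun i => p ^ x.1 i) * f (fun i => x.2 i) :=
  hmul <| Coprime.prod_left fun _ _ => Coprime.prod_right fun j _ =>
    (hp.factoredNumbers_coprime hS (x.2 j).2).pow_left _

omit [Fintype ι] in
lemma pow_right_injective_pi {p : ℕ} (hp : p.Prime) :
    Function.Injective fun (e : ι → ℕ) i => p ^ e i :=
  fun _ _ h => funext fun i => Nat.pow_right_injective hp.two_le (congrFun h i)

lemma summable_and_hasSum_piFactoredNumbers_prod_filter_prime_tsum (hf₁ : f 1 = 1)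
    (hmul : ∀ {m n : ι → ℕ}, Coprime (∏ i, m i) (∏ i, n i) → f (m * n) = f m * f n)
    (hsum : ∀ {p : ℕ}, p.Prime → Summable fun e : ι → ℕ => ‖f fun i => p ^ e i‖)
    (S : Finset ℕ) :
    Summable (fun m : ι → factoredNumbers S => ‖f fun i => m i‖) ∧
      HasSum (fun m : ι → factoredNumbers S => f fun i => m i)
        (∏ p ∈ S with p.Prime, ∑' e : ι → ℕ, f fun i => p ^ e i) := by
  induction S using Finset.induction with
  | empty =>
    rw [factoredNumbers_empty]
    simp only [notMem_empty, IsEmpty.forall_iff, forall_const, filter_true_of_mem, prod_empty]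
    exact ⟨.of_finite, hf₁ ▸ hasSum_unique _⟩
  | insert p S hp ih =>
    rw [filter_insert]
    split_ifs with hpp
    · constructor
      · simp only [← (equivProdPiFactoredNumbers hpp hp).summable_iff, Function.comp_def,
          map_equivProdPiFactoredNumbers hmul]
        refine Summable.of_nonneg_of_le (fun _ ↦ norm_nonneg _) (fun _ ↦ norm_mul_le ..) ?_
        exact (hsum hpp).mul_of_nonneg ih.1 (fun _ ↦ norm_nonneg _) fun _ ↦ norm_nonneg _
      · have hp' : p ∉ {p ∈ S | p.Prime} := mt (mem_of_mem_filter p) hp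
        rw [prod_insert hp', ← (equivProdPiFactoredNumbers hpp hp).hasSum_iff, Function.comp_def]
        simp only [map_equivProdPiFactoredNumbers hmul]
        apply (hsum hpp).of_norm.hasSum.mul ih.2
        apply summable_mul_of_summable_norm (hsum hpp) ih.1
    · rwa [factoredNumbers_insert S hpp]

omit [CompleteSpace R] [Fintype ι] in
lemma tsum_piFactoredNumbers (S : Finset ℕ) :
    ∑' m : ι → factoredNumbers S, f (fun i => m i) =
      ∑' n : Set.univ.pi (fun _ : ι => factoredNumbers S), f n :=
  (Equiv.Set.univPi fun _ : ι => factoredNumbers S).symm.tsum_eq fun n => f n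

lemma norm_tsum_piFactoredNumbers_sub_tsum_lt (hsum : Summable f)
    (hf₀ : ∀ n : ι → ℕ, ∀ i, n i = 0 → f n = 0) {ε : ℝ} (εpos : 0 < ε) :
    ∃ N : ℕ, ∀ S : Finset ℕ, primesBelow N ≤ S →
      ‖(∑' n, f n) - ∑' n : Set.univ.pi (fun _ : ι => factoredNumbers S), f n‖ < ε := by
  obtain ⟨T, hT⟩ := hsum.tsum_vanishing (Metric.ball_mem_nhds 0 εpos)
  refine ⟨T.sup (fun n => univ.sup n) + 1, fun S hS => ?_⟩
  let Z : Set (ι → ℕ) := {n | ∃ i, n i = 0}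
  have hdisj : Disjoint ((Set.univ.pi fun _ => factoredNumbers S)ᶜ \ Z) (T : Set (ι → ℕ)) := by
    refine Set.disjoint_left.mpr fun n ⟨hnS, hnZ⟩ hnT => ?_
    simp only [Set.mem_compl_iff, Set.mem_univ_pi, not_forall] at hnS
    obtain ⟨i, hi⟩ := hnS
    have hN := factoredNumbers_compl hS ⟨hi, fun h => hnZ ⟨i, h⟩⟩
    have := (le_sup (f := fun n : ι → ℕ => univ.sup n) hnT).trans' (le_sup (mem_univ i))
    simp only [Set.mem_ofPred_eq] at hN
    omega
  rw [← hsum.tsum_subtype_add_tsum_subtype_compl (Set.univ.pi fun _ => factoredNumbers S),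
    add_sub_cancel_left, tsum_setElem_eq_tsum_setElem_sdiff _ Z fun n ⟨i, hi⟩ => hf₀ n i hi,
    ← mem_ball_zero_iff]
  exact hT _ hdisj

theorem hasProd_tsum_pi_prime_pow (hf₁ : f 1 = 1)
    (hmul : ∀ {m n : ι → ℕ}, Coprime (∏ i, m i) (∏ i, n i) → f (m * n) = f m * f n)
    (hsum : Summable (‖f ·‖)) (hf₀ : ∀ n : ι → ℕ, ∀ i, n i = 0 → f n = 0) :
    HasProd (fun p : Primes => ∑' e : ι → ℕ, f fun i => p ^ e i) (∑' n, f n) := by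
  let F : ℕ → R := fun p => ∑' e : ι → ℕ, f fun i => p ^ e i
  change HasProd (F ∘ Subtype.val (p := (· ∈ {x | Nat.Prime x}))) _
  rw [hasProd_subtype_iff_mulIndicator, HasProd, SummationFilter.unconditional,
    Metric.tendsto_atTop]
  intro ε hε
  obtain ⟨N₀, hN₀⟩ := norm_tsum_piFactoredNumbers_sub_tsum_lt hsum.of_norm hf₀ hε
  refine ⟨range N₀, fun S hS => ?_⟩
  have hprod := (summable_and_hasSum_piFactoredNumbers_prod_filter_prime_tsum hf₁ hmul
    (fun hp => hsum.comp_injective (pow_right_injective_pi hp)) S).2.tsum_eq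
  have hF : ∏ p ∈ S, {p | Nat.Prime p}.mulIndicator F p = ∏ p ∈ S with p.Prime, F p :=
    prod_mulIndicator_eq_prod_filter S (fun _ => F) _ id
  rw [hF, dist_eq_norm, ← hprod, tsum_piFactoredNumbers, norm_sub_rev]
  exact hN₀ S fun p hp => hS <| mem_range.mpr <| lt_of_mem_primesBelow hp

end MultivariateEulerProduct

lemma abs_prod_le_one {α : Type*} {s : Finset α} {g : α → ℝ} (h : ∀ a ∈ s, |g a| ≤ 1) :
    |∏ a ∈ s, g a| ≤ 1 :=
  (abs_prod s g).trans_le <| prod_le_one (fun _ _ => abs_nonneg _) h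

lemma abs_one_sub_div_prime_le_one {k : ℝ} (hk : 0 ≤ k) (hk2 : k ≤ 2) {p : ℕ} (hp : p.Prime) :
    |1 - k / (p : ℝ)| ≤ 1 := by
  have hp2 : (2 : ℝ) ≤ p := by exact_mod_cast hp.two_le
  have h0 : 0 ≤ k / p := by positivity
  have h1 : k / p ≤ 1 := (div_le_one (by positivity)).mpr (by linarith)
  rw [abs_le]
  constructor <;> linarith

lemma abs_phiStar_le_one (n : ℕ) : |phiStar n| ≤ 1 :=
  abs_prod_le_one fun _ hp =>
    abs_one_sub_div_prime_le_one zero_le_one one_le_two (prime_of_mem_primeFactors hp)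

lemma abs_vartheta_le_one (a b c d : ℕ) : |vartheta a b c d| ≤ 1 := by
  unfold vartheta
  split_ifs
  · simp only [abs_mul]
    refine mul_le_one₀ (mul_le_one₀ (mul_le_one₀ (mul_le_one₀ ?_ ?_ ?_) ?_ ?_) ?_ ?_) ?_
      (abs_prod_le_one fun p hp => abs_one_sub_div_prime_le_one zero_le_two le_rfl
        (prime_of_mem_primeFactors (mem_of_mem_filter p hp))) <;>
      first | positivity | exact abs_phiStar_le_one _
  · simp

lemma prod_primeFactors_mul {M : Type*} [CommMonoid M] {m n : ℕ} (h : Coprime m n) (g : ℕ → M) :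
    ∏ p ∈ (m * n).primeFactors, g p = (∏ p ∈ m.primeFactors, g p) * ∏ p ∈ n.primeFactors, g p := by
  rw [h.primeFactors_mul, prod_union h.disjoint_primeFactors]

lemma phiStar_mul {m n : ℕ} (h : Coprime m n) : phiStar (m * n) = phiStar m * phiStar n :=
  prod_primeFactors_mul h _

lemma prod_primeFactors_filter_not_dvd_mul {M : Type*} [CommMonoid M] {m n k l : ℕ}
    (hmn : Coprime m n) (hml : Coprime m l) (hnk : Coprime n k) (g : ℕ → M) :
    ∏ p ∈ (m * n).primeFactors with ¬ p ∣ k * l, g p =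
      (∏ p ∈ m.primeFactors with ¬ p ∣ k, g p) * ∏ p ∈ n.primeFactors with ¬ p ∣ l, g p := by
  rw [hmn.primeFactors_mul, filter_union,
    prod_union (disjoint_filter_filter hmn.disjoint_primeFactors)]
  congr 1 <;> refine prod_congr (filter_congr fun p hp => ?_) fun _ _ => rfl <;>
    have hp' := prime_of_mem_primeFactors hp <;> rw [hp'.dvd_mul]
  · have := hp'.coprime_iff_not_dvd.mp (hml.coprime_dvd_left (dvd_of_mem_primeFactors hp))
    tauto
  · have := hp'.coprime_iff_not_dvd.mp (hnk.coprime_dvd_left (dvd_of_mem_primeFactors hp))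
    tauto

lemma coprime_mul_mul_iff {a b c d : ℕ} (had : Coprime a d) (hbc : Coprime b c) :
    Coprime (a * b) (c * d) ↔ Coprime a c ∧ Coprime b d := by
  rw [coprime_mul_iff_left, coprime_mul_iff_right, coprime_mul_iff_right]
  tauto

lemma vartheta_mul {a b c d m n k l : ℕ} (h : Coprime (a * b * c * d) (m * n * k * l)) :
    vartheta (a * m) (b * n) (c * k) (d * l) = vartheta a b c d * vartheta m n k l := by
  simp only [coprime_mul_iff_left, coprime_mul_iff_right] at h
  obtain ⟨⟨⟨⟨⟨⟨ham, hbm⟩, hcm⟩, hdm⟩, ⟨⟨⟨han, hbn⟩, hcn⟩, hdn⟩⟩, ⟨⟨⟨hak, hbk⟩, hck⟩, hdk⟩⟩,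
    ⟨⟨⟨hal, hbl⟩, hcl⟩, hdl⟩⟩ := h
  unfold vartheta
  simp only [coprime_mul_mul_iff hbk hcn.symm, coprime_mul_mul_iff hbl hdn.symm,
    coprime_mul_mul_iff hcl hdk.symm]
  rw [phiStar_mul ham, phiStar_mul hbn, phiStar_mul hck, phiStar_mul hdl, show b * n * (c * k) * (d * l) = b * c * d * (n * k * l) by ring,
    prod_primeFactors_filter_not_dvd_mul ham ((han.mul_right hak).mul_right hal)
      ((hbm.mul_left hcm).mul_left hdm).symm]
  split_ifs <;> first | tauto | ring

section PrimePowers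

variable {p : ℕ} (hp : p.Prime)
include hp

lemma coprime_prime_pow_pow_iff {b c : ℕ} : Coprime (p ^ b) (p ^ c) ↔ b = 0 ∨ c = 0 := by
  rcases b with _ | b
  · simp
  rcases c with _ | c
  · simp
  simp only [coprime_pow_left_iff (succ_pos b), coprime_pow_right_iff (succ_pos c),
    coprime_self, hp.ne_one, succ_ne_zero, or_self]

-- `ϑ(p^a, p^b, p^c, p^d)` vanishes when two of `b, c, d` are positive; the four summands are the
-- cases `b = c = d = 0` and exactly one of `b, c, d` positive.
lemma vartheta_prime_pow (a b c d : ℕ) :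
    (vartheta (p ^ a) (p ^ b) (p ^ c) (p ^ d) : ℂ) =
      (if a = 0 then 1 else (1 - 1 / (p : ℂ)) * (1 - 2 / (p : ℂ))) *
          ((if b = 0 then 1 else 0) * ((if c = 0 then 1 else 0) * (if d = 0 then 1 else 0))) +
        (if a = 0 then 1 else 1 - 1 / (p : ℂ)) *
          ((if b = 0 then 0 else 1 - 1 / (p : ℂ)) *
              ((if c = 0 then 1 else 0) * (if d = 0 then 1 else 0)) +
            (if b = 0 then 1 else 0) *
              ((if c = 0 then 0 else 1 - 1 / (p : ℂ)) * (if d = 0 then 1 else 0)) +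
            (if b = 0 then 1 else 0) *
              ((if c = 0 then 1 else 0) * (if d = 0 then 0 else 1 - 1 / (p : ℂ)))) := by
  have hdvd {k : ℕ} : p ∣ p ^ k ↔ k ≠ 0 :=
    ⟨fun h hk => hp.not_dvd_one (by simpa [hk] using h), dvd_pow_self p⟩
  rcases a with _ | a <;> rcases b with _ | b <;> rcases c with _ | c <;> rcases d with _ | d <;>
    simp [vartheta, phiStar, coprime_prime_pow_pow_iff hp, primeFactors_prime_pow, hp, hp.ne_one,
      filter_singleton, hdvd]

end PrimePowers

def varthetaTerm (z₁ z₂ z₃ z₄ : ℂ) (η : ℕ × ℕ × ℕ × ℕ) : ℂ :=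
  (vartheta η.1 η.2.1 η.2.2.1 η.2.2.2 : ℂ) * (η.1 : ℂ) ^ (-z₁) * (η.2.1 : ℂ) ^ (-z₂) *
    (η.2.2.1 : ℂ) ^ (-z₃) * (η.2.2.2 : ℂ) ^ (-z₄)

section VarthetaTerm

variable {z₁ z₂ z₃ z₄ : ℂ}

lemma varthetaTerm_one : varthetaTerm z₁ z₂ z₃ z₄ 1 = 1 := by
  simp [varthetaTerm, vartheta, phiStar]

lemma varthetaTerm_mul {η η' : ℕ × ℕ × ℕ × ℕ}
    (h : Coprime (η.1 * η.2.1 * η.2.2.1 * η.2.2.2) (η'.1 * η'.2.1 * η'.2.2.1 * η'.2.2.2)) :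
    varthetaTerm z₁ z₂ z₃ z₄ (η * η') = varthetaTerm z₁ z₂ z₃ z₄ η * varthetaTerm z₁ z₂ z₃ z₄ η' := by
  simp only [varthetaTerm, Prod.fst_mul, Prod.snd_mul, vartheta_mul h, Nat.cast_mul,
    Complex.natCast_mul_natCast_cpow, Complex.ofReal_mul]
  ring

lemma varthetaTerm_eq_zero (h₁ : z₁ ≠ 0) (h₂ : z₂ ≠ 0) (h₃ : z₃ ≠ 0) (h₄ : z₄ ≠ 0)
    {η : ℕ × ℕ × ℕ × ℕ} (hη : η.1 * η.2.1 * η.2.2.1 * η.2.2.2 = 0) :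
    varthetaTerm z₁ z₂ z₃ z₄ η = 0 := by
  simp only [mul_eq_zero] at hη
  rcases hη with ((h | h) | h) | h <;> simp [varthetaTerm, h, h₁, h₂, h₃, h₄]

lemma norm_varthetaTerm_le (h₁ : z₁.re ≠ 0) (h₂ : z₂.re ≠ 0) (h₃ : z₃.re ≠ 0) (h₄ : z₄.re ≠ 0)
    (η : ℕ × ℕ × ℕ × ℕ) :
    ‖varthetaTerm z₁ z₂ z₃ z₄ η‖ ≤ (η.1 : ℝ) ^ (-z₁.re) * ((η.2.1 : ℝ) ^ (-z₂.re) *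
      ((η.2.2.1 : ℝ) ^ (-z₃.re) * (η.2.2.2 : ℝ) ^ (-z₄.re))) := by
  have hn (n : ℕ) {z : ℂ} (hz : z.re ≠ 0) : ‖(n : ℂ) ^ (-z)‖ = (n : ℝ) ^ (-z.re) := by
    rw [Complex.norm_natCast_cpow_of_re_ne_zero _ (by simpa using hz), Complex.neg_re]
  simp only [varthetaTerm, norm_mul, Complex.norm_real, Real.norm_eq_abs, hn _ h₁, hn _ h₂,
    hn _ h₃, hn _ h₄, mul_assoc]
  exact mul_le_of_le_one_left (by positivity) (abs_vartheta_le_one ..)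

lemma summable_norm_varthetaTerm (h₁ : 1 < z₁.re) (h₂ : 1 < z₂.re) (h₃ : 1 < z₃.re)
    (h₄ : 1 < z₄.re) : Summable fun η => ‖varthetaTerm z₁ z₂ z₃ z₄ η‖ := by
  have hs {z : ℂ} (hz : 1 < z.re) : Summable fun n : ℕ => (n : ℝ) ^ (-z.re) :=
    Real.summable_nat_rpow.mpr (by linarith)
  have h0 (z : ℂ) : 0 ≤ fun n : ℕ => (n : ℝ) ^ (-z.re) := fun n => by positivity
  refine .of_nonneg_of_le (fun _ => norm_nonneg _)
    (norm_varthetaTerm_le (by linarith) (by linarith) (by linarith) (by linarith)) ?_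
  exact (hs h₁).mul_of_nonneg ((hs h₂).mul_of_nonneg ((hs h₃).mul_of_nonneg (hs h₄) (h0 _) (h0 _))
    (h0 _) fun _ => by positivity) (h0 _) fun _ => by positivity

end VarthetaTerm

theorem hasSum_mul_mul_mul_of_summable_norm {R : Type*} [NormedRing R] [CompleteSpace R]
    {ι₁ ι₂ ι₃ ι₄ : Type*} {f₁ : ι₁ → R} {f₂ : ι₂ → R} {f₃ : ι₃ → R} {f₄ : ι₄ → R}
    {a₁ a₂ a₃ a₄ : R} (hf₁ : HasSum f₁ a₁) (hf₂ : HasSum f₂ a₂) (hf₃ : HasSum f₃ a₃)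
    (hf₄ : HasSum f₄ a₄) (h₁ : Summable (‖f₁ ·‖)) (h₂ : Summable (‖f₂ ·‖))
    (h₃ : Summable (‖f₃ ·‖)) (h₄ : Summable (‖f₄ ·‖)) :
    HasSum (fun e : ι₁ × ι₂ × ι₃ × ι₄ => f₁ e.1 * (f₂ e.2.1 * (f₃ e.2.2.1 * f₄ e.2.2.2)))
      (a₁ * (a₂ * (a₃ * a₄))) := by
  rw [← hf₁.tsum_eq, ← hf₂.tsum_eq, ← hf₃.tsum_eq, ← hf₄.tsum_eq,
    tsum_mul_tsum_of_summable_norm h₃ h₄, tsum_mul_tsum_of_summable_norm h₂ (h₃.mul_norm h₄),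
    tsum_mul_tsum_of_summable_norm h₁ (h₂.mul_norm (h₃.mul_norm h₄))]
  exact (summable_mul_of_summable_norm h₁ (h₂.mul_norm (h₃.mul_norm h₄))).hasSum

lemma hasSum_ite_zero_mul_pow {c₀ c x : ℂ} (hx : ‖x‖ < 1) :
    HasSum (fun k : ℕ => (if k = 0 then c₀ else c) * x ^ k) (c₀ + c * x * (1 - x)⁻¹) := by
  rw [← hasSum_nat_add_iff' 1]
  simp only [sum_range_one, if_pos, pow_zero, mul_one, add_sub_cancel_left, add_eq_zero,
    one_ne_zero, and_false, if_false, _root_.pow_succ', ← mul_assoc]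
  exact (hasSum_geometric_of_norm_lt_one hx).mul_left (c * x)

lemma summable_norm_ite_zero_mul_pow {c₀ c x : ℂ} (hx : ‖x‖ < 1) :
    Summable fun k : ℕ => ‖(if k = 0 then c₀ else c) * x ^ k‖ := by
  rw [← summable_nat_add_iff 1]
  simp only [add_eq_zero, one_ne_zero, and_false, if_false, norm_mul, norm_pow, _root_.pow_succ',
    ← mul_assoc]
  exact (summable_geometric_of_lt_one (norm_nonneg _) hx).mul_left (‖c‖ * ‖x‖)

lemma natCast_pow_cpow (n k : ℕ) (w : ℂ) : ((n ^ k : ℕ) : ℂ) ^ w = ((n : ℂ) ^ w) ^ k := by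
  rw [Nat.cast_pow, ← Complex.natCast_cpow_natCast_mul, Complex.cpow_nat_mul]

section LocalFactor

variable {p : ℕ} (hp : p.Prime) {z : ℂ}
include hp

lemma norm_natCast_cpow_neg_lt_one (hz : 0 < z.re) : ‖(p : ℂ) ^ (-z)‖ < 1 := by
  rw [Complex.norm_natCast_cpow_of_pos hp.pos, Complex.neg_re]
  exact Real.rpow_lt_one_of_one_lt_of_neg (by exact_mod_cast hp.one_lt) (neg_neg_of_pos hz)

lemma hasSum_ite_zero_mul_cpow_neg (c₀ c : ℂ) (hz : 0 < z.re) :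
    HasSum (fun k : ℕ => (if k = 0 then c₀ else c) * ((p : ℂ) ^ (-z)) ^ k)
      (c₀ + c * ((p : ℂ) ^ z - 1)⁻¹) := by
  have hP : (p : ℂ) ^ z ≠ 0 := norm_pos_iff.mp (Complex.norm_natCast_cpow_pos_of_pos hp.pos z)
  convert hasSum_ite_zero_mul_pow (c₀ := c₀) (c := c) (norm_natCast_cpow_neg_lt_one hp hz) using 2
  rw [Complex.cpow_neg, mul_assoc, ← mul_inv, mul_sub, mul_one, mul_inv_cancel₀ hP]

variable {z₁ z₂ z₃ z₄ : ℂ} in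
theorem hasSum_varthetaTerm_prime_pow (h₁ : 0 < z₁.re) (h₂ : 0 < z₂.re) (h₃ : 0 < z₃.re)
    (h₄ : 0 < z₄.re) :
    HasSum (fun e : ℕ × ℕ × ℕ × ℕ =>
        varthetaTerm z₁ z₂ z₃ z₄ (p ^ e.1, p ^ e.2.1, p ^ e.2.2.1, p ^ e.2.2.2))
      (1 + (1 - 1 / (p : ℂ)) * (((p : ℂ) ^ z₂ - 1)⁻¹ + ((p : ℂ) ^ z₃ - 1)⁻¹ +
          ((p : ℂ) ^ z₄ - 1)⁻¹ + (1 - 2 / (p : ℂ)) * ((p : ℂ) ^ z₁ - 1)⁻¹) +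
        (1 - 1 / (p : ℂ)) ^ 2 * ((p : ℂ) ^ z₁ - 1)⁻¹ *
          (((p : ℂ) ^ z₂ - 1)⁻¹ + ((p : ℂ) ^ z₃ - 1)⁻¹ + ((p : ℂ) ^ z₄ - 1)⁻¹)) := by
  have hprod (a₁ b₁ a₂ b₂ a₃ b₃ a₄ b₄ : ℂ) := hasSum_mul_mul_mul_of_summable_norm
    (hasSum_ite_zero_mul_cpow_neg hp a₁ b₁ h₁) (hasSum_ite_zero_mul_cpow_neg hp a₂ b₂ h₂)
    (hasSum_ite_zero_mul_cpow_neg hp a₃ b₃ h₃) (hasSum_ite_zero_mul_cpow_neg hp a₄ b₄ h₄)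
    (summable_norm_ite_zero_mul_pow (norm_natCast_cpow_neg_lt_one hp h₁))
    (summable_norm_ite_zero_mul_pow (norm_natCast_cpow_neg_lt_one hp h₂))
    (summable_norm_ite_zero_mul_pow (norm_natCast_cpow_neg_lt_one hp h₃))
    (summable_norm_ite_zero_mul_pow (norm_natCast_cpow_neg_lt_one hp h₄))
  set u : ℂ := 1 - 1 / (p : ℂ)
  convert (((hprod 1 (u * (1 - 2 / p)) 1 0 1 0 1 0).add (hprod 1 u 0 u 1 0 1 0)).add
    (hprod 1 u 1 0 0 u 1 0)).add (hprod 1 u 1 0 1 0 0 u) using 1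
  · rfl
  · funext ⟨a, b, c, d⟩
    simp only [varthetaTerm, natCast_pow_cpow, vartheta_prime_pow hp]
    ring
  · ring

end LocalFactor

def finFourArrowEquiv (α : Type*) : (Fin 4 → α) ≃ α × α × α × α where
  toFun n := (n 0, n 1, n 2, n 3)
  invFun η := ![η.1, η.2.1, η.2.2.1, η.2.2.2]
  left_inv n := by ext i; fin_cases i <;> rfl
  right_inv _ := rfl

lemma finFourArrowEquiv_mul {α : Type*} [Mul α] (m n : Fin 4 → α) :
    finFourArrowEquiv α (m * n) = finFourArrowEquiv α m * finFourArrowEquiv α n :=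
  rfl

section EulerProduct

variable {z₁ z₂ z₃ z₄ : ℂ} (h₁ : 1 < z₁.re) (h₂ : 1 < z₂.re) (h₃ : 1 < z₃.re) (h₄ : 1 < z₄.re)
include h₁ h₂ h₃ h₄

theorem hasProd_varthetaTerm :
    HasProd (fun p : Primes => ∑' e : ℕ × ℕ × ℕ × ℕ,
        varthetaTerm z₁ z₂ z₃ z₄ (p ^ e.1, p ^ e.2.1, p ^ e.2.2.1, p ^ e.2.2.2))
      (∑' η, varthetaTerm z₁ z₂ z₃ z₄ η) := by
  let E := finFourArrowEquiv ℕ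
  have hne {z : ℂ} (hz : 1 < z.re) : z ≠ 0 := Complex.ne_zero_of_re_pos (by linarith)
  have H := hasProd_tsum_pi_prime_pow (f := varthetaTerm z₁ z₂ z₃ z₄ ∘ E) varthetaTerm_one
    (fun {m n} h => by
      rw [Function.comp_apply, finFourArrowEquiv_mul]
      exact varthetaTerm_mul (show Coprime (m 0 * m 1 * m 2 * m 3) (n 0 * n 1 * n 2 * n 3)
        from Fin.prod_univ_four m ▸ Fin.prod_univ_four n ▸ h))
    ((summable_norm_varthetaTerm h₁ h₂ h₃ h₄).comp_injective E.injective)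
    (fun n i hi => varthetaTerm_eq_zero (hne h₁) (hne h₂) (hne h₃) (hne h₄)
      (show n 0 * n 1 * n 2 * n 3 = 0 from Fin.prod_univ_four n ▸ prod_eq_zero (mem_univ i) hi))
  have hE (g : ℕ × ℕ × ℕ × ℕ → ℂ) : ∑' η, g η = ∑' n, g (E n) := (E.tsum_eq g).symm
  simp only [hE]
  exact H

end EulerProduct

lemma tsum_varthetaTerm_add_one {z₁ z₂ z₃ z₄ : ℂ} (h₁ : z₁ ≠ 0) (h₂ : z₂ ≠ 0) (h₃ : z₃ ≠ 0)
    (h₄ : z₄ ≠ 0) : ∑' e, varthetaTerm z₁ z₂ z₃ z₄ (e + 1) = ∑' η, varthetaTerm z₁ z₂ z₃ z₄ η := by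
  refine (add_left_injective 1).tsum_eq fun η hη => ?_
  have h := mt (varthetaTerm_eq_zero h₁ h₂ h₃ h₄) hη
  simp only [mul_ne_zero_iff, ← Nat.one_le_iff_ne_zero] at h
  exact ⟨η - 1, tsub_add_cancel_of_le (by simpa [Prod.le_def, and_assoc] using h)⟩

theorem vartheta_euler_product (s : ℂ) (hs : 0 < s.re) :
    Summable (fun e : ℕ × ℕ × ℕ × ℕ =>
      ‖(vartheta (e.1 + 1) (e.2.1 + 1) (e.2.2.1 + 1) (e.2.2.2 + 1) : ℂ) *
        ((e.1 + 1 : ℕ) : ℂ) ^ (-(4 * s + 1)) * ((e.2.1 + 1 : ℕ) : ℂ) ^ (-(2 * s + 1)) *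
        ((e.2.2.1 + 1 : ℕ) : ℂ) ^ (-(3 * s + 1)) * ((e.2.2.2 + 1 : ℕ) : ℂ) ^ (-(3 * s + 1))‖) ∧
    (∑' e : ℕ × ℕ × ℕ × ℕ,
      (vartheta (e.1 + 1) (e.2.1 + 1) (e.2.2.1 + 1) (e.2.2.2 + 1) : ℂ) *
        ((e.1 + 1 : ℕ) : ℂ) ^ (-(4 * s + 1)) * ((e.2.1 + 1 : ℕ) : ℂ) ^ (-(2 * s + 1)) *
        ((e.2.2.1 + 1 : ℕ) : ℂ) ^ (-(3 * s + 1)) * ((e.2.2.2 + 1 : ℕ) : ℂ) ^ (-(3 * s + 1)))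
      = ∏' p : Nat.Primes,
          (1 + (1 - 1 / ((p : ℕ) : ℂ)) *
              ((((p : ℕ) : ℂ) ^ (2 * s + 1) - 1)⁻¹ + 2 * (((p : ℕ) : ℂ) ^ (3 * s + 1) - 1)⁻¹ +
                (1 - 2 / ((p : ℕ) : ℂ)) * (((p : ℕ) : ℂ) ^ (4 * s + 1) - 1)⁻¹) +
            (1 - 1 / ((p : ℕ) : ℂ)) ^ 2 * (((p : ℕ) : ℂ) ^ (4 * s + 1) - 1)⁻¹ *
              ((((p : ℕ) : ℂ) ^ (2 * s + 1) - 1)⁻¹ + 2 * (((p : ℕ) : ℂ) ^ (3 * s + 1) - 1)⁻¹)) := by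
  have h₄ : 1 < (4 * s + 1).re := by simp; linarith
  have h₂ : 1 < (2 * s + 1).re := by simp; linarith
  have h₃ : 1 < (3 * s + 1).re := by simp; linarith
  have hne {z : ℂ} (hz : 1 < z.re) : z ≠ 0 := Complex.ne_zero_of_re_pos (by linarith)
  have hsum := (summable_norm_varthetaTerm h₄ h₂ h₃ h₃).comp_injective (add_left_injective 1)
  refine ⟨hsum, (tsum_varthetaTerm_add_one (hne h₄) (hne h₂) (hne h₃) (hne h₃)).trans ?_⟩
  rw [← (hasProd_varthetaTerm h₄ h₂ h₃ h₃).tprod_eq]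
  refine tprod_congr fun p => ?_
  rw [(hasSum_varthetaTerm_prime_pow p.prop (by linarith) (by linarith) (by linarith)
    (by linarith)).tsum_eq]
  ring
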